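/- Let (X, d) be a strong pseudo k-metric space and let x_1,…,x_k ∈ X. Then there exists a pair (X, d′) ∈ C_{k,∞}^1 (a coboundary k-metric in 1 dimension) such that (1) d′(y_1,…,y_k) ≤ d(y_1,…,y_k) for all y_1,…,y_k ∈ X (non-expansion), and (2) d′(x_1,…,x_k) = d(x_1,…,x_k) (one-tuple distance preservation). -/

import Mathlib

open scoped BigOperators

/-- An alternating real-valued function on `j`-tuples of `X`
(a `(j-1)`-dimensional chain on the complete complex on `X`). -/
def AltChain {X : Type*} {j : ℕ} (α : (Fin j → X) → ℝ) : Prop :=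
  ∀ (π : Equiv.Perm (Fin j)) (x : Fin j → X),
    α (x ∘ π) = ((Equiv.Perm.sign π : ℤ) : ℝ) * α x

/-- The boundary operator: `(∂α)(y₁,…,y_j) = ∑_{x ∈ X} α(x, y₁, …, y_j)`. -/
noncomputable def bdry {X : Type*} [Fintype X] {j : ℕ}
    (α : (Fin (j + 1) → X) → ℝ) : (Fin j → X) → ℝ :=
  fun y => ∑ x : X, α (Fin.cons x y)

/-- The elementary chain `1_t`: value `sign π` on the reordering of `t` by `π`,
and `0` on all other tuples. -/
noncomputable def unitChain {X : Type*} [DecidableEq X] {j : ℕ} (t : Fin j → X) :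
    (Fin j → X) → ℝ :=
  fun s => ∑ π : Equiv.Perm (Fin j),
    if s = t ∘ π then ((Equiv.Perm.sign π : ℤ) : ℝ) else 0

/-- The coboundary operator:
`(δf)(x₁,…,x_{j+2}) = ∑ᵢ (-1)^(i+1) f(x₁,…,x̂ᵢ,…,x_{j+2})` (`0`-indexed sign `(-1)^i`). -/
noncomputable def cobdry {X : Type*} {j : ℕ}
    (f : (Fin (j + 1) → X) → ℝ) : (Fin (j + 2) → X) → ℝ :=
  fun x => ∑ i : Fin (j + 2), (-1 : ℝ) ^ (i : ℕ) * f (x ∘ i.succAbove)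

/-- A pseudo metric of arity `K` (a pseudo `K`-metric): nonnegative, vanishing on
non-injective tuples, permutation invariant, satisfying the simplex inequality. -/
structure IsPseudoMetric {X : Type*} (K : ℕ) (d : (Fin K → X) → ℝ) : Prop where
  nonneg : ∀ x, 0 ≤ d x
  eq_zero : ∀ x, ¬ Function.Injective x → d x = 0
  perm : ∀ (π : Equiv.Perm (Fin K)) (x), d (x ∘ π) = d x
  simplex : ∀ (x : Fin K → X) (y : X),
    d x ≤ ∑ i : Fin K, d (Function.update x i y)

/-- A strong pseudo metric of arity `k + 1` (a strong pseudo `(k+1)`-metric).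
The strong simplex inequality `d t ≤ ∑_τ |α(τ)| * d(τ)` (with the sum over
`(k+1)`-element subsets `τ` of `X`, each evaluated on any fixed ordering of `τ`)
is stated in the equivalent form `(k+1)! * d t ≤ ∑_s |α(s)| * d(s)` with the sum
over all `(k+1)`-tuples `s`: since `α` is alternating and `d` is permutation
invariant, the summand depends only on the underlying set of `s` (it vanishes on
tuples with repeated entries), and each `(k+1)`-element subset has exactly
`(k+1)!` orderings. -/
structure IsStrongPseudoMetric {X : Type*} [Fintype X] [DecidableEq X] (k : ℕ)
    (d : (Fin (k + 1) → X) → ℝ) : Prop where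
  nonneg : ∀ x, 0 ≤ d x
  eq_zero : ∀ x, ¬ Function.Injective x → d x = 0
  perm : ∀ (π : Equiv.Perm (Fin (k + 1))) (x), d (x ∘ π) = d x
  strong_simplex : ∀ t : Fin (k + 1) → X, Function.Injective t →
    ∀ α : (Fin (k + 1) → X) → ℝ, AltChain α → bdry α = bdry (unitChain t) →
      ((k + 1).factorial : ℝ) * d t ≤ ∑ s : Fin (k + 1) → X, |α s| * d s

/-- `(X, d)` is a coboundary metric of arity `k + 2` in `m` dimensions with respect
to the norm `ν` on `ℝ^m`: there are chains `f 1, …, f m` on `(k+1)`-tuples (i.e.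
`(k+2)-2`-dimensional chains for arity `k+2`) whose simultaneous coboundary
realizes `d` on injective tuples, and `d` vanishes on non-injective tuples. -/
def IsCoboundaryMetric {X : Type*} (k m : ℕ) (ν : (Fin m → ℝ) → ℝ)
    (d : (Fin (k + 2) → X) → ℝ) : Prop :=
  ∃ f : Fin m → ((Fin (k + 1) → X) → ℝ),
    (∀ i, AltChain (f i)) ∧
    (∀ x, Function.Injective x → d x = ν (fun i => cobdry (f i) x)) ∧
    (∀ x, ¬ Function.Injective x → d x = 0)

/-- `ν` is a norm on `ℝ^m`. -/
structure IsNorm {m : ℕ} (ν : (Fin m → ℝ) → ℝ) : Prop where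
  nonneg : ∀ x, 0 ≤ ν x
  eq_zero_iff : ∀ x, ν x = 0 ↔ x = 0
  homog : ∀ (c : ℝ) (x), ν (c • x) = |c| * ν x
  triangle : ∀ x y, ν (x + y) ≤ ν x + ν y

/-- The `ℓ_p` norm on `ℝ^m` for real `p`. -/
noncomputable def lpNorm (p : ℝ) {m : ℕ} (x : Fin m → ℝ) : ℝ :=
  (∑ i, |x i| ^ p) ^ (1 / p)

/-- The `ℓ_1` norm on `ℝ^m`. -/
noncomputable def l1Norm {m : ℕ} (x : Fin m → ℝ) : ℝ := ∑ i, |x i|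

/-- The `ℓ_2` (Euclidean) norm on `ℝ^m`. -/
noncomputable def l2Norm {m : ℕ} (x : Fin m → ℝ) : ℝ := Real.sqrt (∑ i, x i ^ 2)

/-- The `ℓ_∞` norm on `ℝ^m` (the sup norm, which is the norm of `Fin m → ℝ`). -/
noncomputable def linfNorm {m : ℕ} (x : Fin m → ℝ) : ℝ := ‖x‖

/- The apex extension of `d` (of arity `K`), with the apex being
`none : Option X` (a new element not in `X`): on an injective `(K+1)`-tuple
containing the apex in position `i` it is `d` of the tuple with position `i`
removed, and it is `0` on all other tuples. -/
open Classical in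
noncomputable def apexExt {X : Type*} {K : ℕ} (d : (Fin K → X) → ℝ) :
    (Fin (K + 1) → Option X) → ℝ := fun x =>
  if h : Function.Injective x ∧ ∃ i, x i = none then
    d (fun j =>
      Option.get (x ((Classical.choose h.2).succAbove j))
        (by
          rw [Option.isSome_iff_ne_none]
          intro hnone
          exact Fin.succAbove_ne (Classical.choose h.2) j
            (h.1 (hnone.trans (Classical.choose_spec h.2).symm))))
  else 0

/-- The `K`-dimensional volume of the simplex with vertices `y 0, …, y K` in `ℝ^m`:
`(1/K!) * √(det (AᵀA))` where `A` is the `m × K` matrix with columns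
`y i - y 0`, `i = 1, …, K`. -/
noncomputable def simplexVolume {m K : ℕ} (y : Fin (K + 1) → (Fin m → ℝ)) : ℝ :=
  (1 / (K.factorial : ℝ)) *
    Real.sqrt
      (Matrix.det
        (Matrix.of fun i j : Fin K =>
          ∑ l : Fin m, (y i.succ l - y 0 l) * (y j.succ l - y 0 l)))

/-!
The strong simplex inequality says that the seminorm `α ↦ ∑_τ |α(τ)| d(τ)` on alternating
`(k-1)`-chains is at least `d(t)` on the whole coset `1_t + (cycles)`. By Hahn–Banach there is
a linear functional `g`, dominated by this seminorm, that vanishes on cycles and takes the value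
`d(t)` at `1_t`; vanishing on cycles, `g` factors as `f ∘ ∂`. The `(k-2)`-chain
`F(y) := f(1_y)` then satisfies `δF(s) = f(∂1_s) = g(1_s)`, so `|δF| ≤ d` with equality at `t`.
-/

open Finset
open scoped Nat

theorem LinearMap.exists_comp_eq_of_ker_le {K E V : Type*} [Field K] [AddCommGroup E] [Module K E]
    [AddCommGroup V] [Module K V] (u : E →ₗ[K] V) (g : E →ₗ[K] K)
    (h : LinearMap.ker u ≤ LinearMap.ker g) : ∃ f : V →ₗ[K] K, f ∘ₗ u = g := by
  obtain ⟨s, hs⟩ := ((LinearMap.ker u).liftQ u le_rfl).exists_leftInverse_of_injective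
    (Submodule.ker_liftQ_eq_bot _ _ _ le_rfl)
  refine ⟨(LinearMap.ker u).liftQ g h ∘ₗ s, LinearMap.ext fun x => ?_⟩
  have hx := LinearMap.congr_fun hs (Submodule.Quotient.mk x)
  simp only [LinearMap.comp_apply, Submodule.liftQ_apply, LinearMap.id_apply] at hx ⊢
  rw [hx, Submodule.liftQ_apply]

theorem Seminorm.exists_linearMap_apply_eq_of_le_coset {E : Type*} [AddCommGroup E] [Module ℝ E]
    (p : Seminorm ℝ E) (W : Submodule ℝ E) {v : E} {a : ℝ} (ha : 0 ≤ a)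
    (hW : ∀ w ∈ W, a ≤ p (w + v)) :
    ∃ g : E →ₗ[ℝ] ℝ, g v = a ∧ W ≤ LinearMap.ker g ∧ ∀ x, |g x| ≤ p x := by
  by_cases hv : v ∈ W
  · have : a ≤ 0 := by simpa using hW (-v) (W.neg_mem hv)
    exact ⟨0, by simp; linarith, fun _ _ => rfl, fun x => by simp⟩
  set L := LinearPMap.supSpanSingleton (⟨W, 0⟩ : E →ₗ.[ℝ] ℝ) v a hv
  have hL : ∀ x : L.domain, L x ≤ p x := by
    rintro ⟨x, hx⟩
    obtain ⟨w, hw, y, hy, rfl⟩ := Submodule.mem_sup.1 hx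
    obtain ⟨c, rfl⟩ := Submodule.mem_span_singleton.1 hy
    rw [LinearPMap.supSpanSingleton_apply_mk _ _ _ hv w hw c]
    simp only [LinearPMap.mk_apply, LinearMap.zero_apply, zero_add, smul_eq_mul]
    rcases le_or_gt c 0 with hc | hc
    · exact (mul_nonpos_of_nonpos_of_nonneg hc ha).trans (apply_nonneg p _)
    · calc c * a ≤ c * p (c⁻¹ • w + v) := by gcongr; exact hW _ (W.smul_mem _ hw)
        _ = p (w + c • v) := by
          simpa [abs_of_pos hc, smul_inv_smul₀ hc.ne'] using
            (map_smul_eq_mul p c (c⁻¹ • w + v)).symm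
  obtain ⟨g, hgL, hgp⟩ := exists_extension_of_le_sublinear L p
    (fun c hc x => by rw [map_smul_eq_mul, Real.norm_of_nonneg hc.le]) (map_add_le_add p) hL
  refine ⟨g, ?_, fun w hw => ?_, fun x => abs_le.2 ⟨?_, hgp x⟩⟩
  · rw [hgL ⟨v, Submodule.mem_sup_right (Submodule.mem_span_singleton_self v)⟩,
      LinearPMap.supSpanSingleton_apply_self]
  · rw [LinearMap.mem_ker, hgL ⟨w, Submodule.mem_sup_left hw⟩,
      LinearPMap.supSpanSingleton_apply_mk_of_mem _ _ hv hw]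
    rfl
  · have := hgp (-x)
    rw [map_neg, map_neg_eq_map] at this
    linarith

section UnitChain

variable {X : Type*} [DecidableEq X]

theorem unitChain_eq_det {j : ℕ} (t s : Fin j → X) :
    unitChain t s = (Matrix.of fun i l : Fin j => if s i = t l then (1 : ℝ) else 0).det := by
  rw [Matrix.det_apply', unitChain]
  refine Fintype.sum_equiv (Equiv.inv (Equiv.Perm (Fin j))) _ _ fun π => ?_
  have hcond : s = t ∘ π ↔ ∀ i, s (π⁻¹ i) = t i :=
    ⟨fun h i => by simp [h], fun h => funext fun i => by simpa using h (π i)⟩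
  simp only [Matrix.of_apply, Equiv.inv_apply, prod_boole]
  by_cases h : s = t ∘ π
  · simp [h]
  · rw [if_neg h, if_neg (by simpa using mt hcond.2 h)]
    simp

theorem altChain_unitChain {j : ℕ} (t : Fin j → X) : AltChain (unitChain t) := by
  intro π s
  rw [unitChain_eq_det, unitChain_eq_det, ← Matrix.det_permute]
  rfl

theorem unitChain_comp_perm {j : ℕ} (t : Fin j → X) (π : Equiv.Perm (Fin j)) :
    unitChain (t ∘ π) = ((Equiv.Perm.sign π : ℤ) : ℝ) • unitChain t := by
  funext s
  rw [unitChain_eq_det, Pi.smul_apply, unitChain_eq_det, smul_eq_mul, ← Matrix.det_permute']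
  rfl

theorem abs_unitChain_of_injective {j : ℕ} {s : Fin j → X} (hs : Function.Injective s)
    (u : Fin j → X) :
    |unitChain s u| = ∑ π : Equiv.Perm (Fin j), if u = s ∘ π then 1 else 0 := by
  by_cases hu : ∃ π₀ : Equiv.Perm (Fin j), u = s ∘ π₀
  · obtain ⟨π₀, rfl⟩ := hu
    have hne : ∀ π ≠ π₀, s ∘ π₀ ≠ s ∘ π :=
      fun π hπ h => hπ (Equiv.ext fun i => (hs (congrFun h i)).symm)
    rw [unitChain, sum_eq_single π₀ (fun π _ hπ => if_neg (hne π hπ)) (by simp),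
      sum_eq_single π₀ (fun π _ hπ => if_neg (hne π hπ)) (by simp), if_pos rfl, if_pos rfl]
    exact abs_unit_intCast _
  · simp only [not_exists] at hu
    simp [unitChain, hu]

theorem altChain_comp_unitChain {j : ℕ} (f : ((Fin j → X) → ℝ) →ₗ[ℝ] ℝ) :
    AltChain (fun y => f (unitChain y)) := by
  intro π y
  simp [unitChain_comp_perm, map_smul]

theorem sum_abs_unitChain_mul [Fintype X] {j : ℕ} {s : Fin j → X} (hs : Function.Injective s)
    (d : (Fin j → X) → ℝ) (hd : ∀ (π : Equiv.Perm (Fin j)) x, d (x ∘ π) = d x) :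
    ∑ u, |unitChain s u| * d u = j ! * d s := by
  simp_rw [abs_unitChain_of_injective hs, sum_mul, boole_mul]
  rw [sum_comm]
  simp [hd, Fintype.card_perm]

end UnitChain

section Boundary

variable (X : Type*) [Fintype X]

noncomputable def bdryLinearMap (j : ℕ) : ((Fin (j + 1) → X) → ℝ) →ₗ[ℝ] (Fin j → X) → ℝ where
  toFun := bdry
  map_add' _ _ := funext fun _ => sum_add_distrib
  map_smul' _ _ := funext fun _ => (mul_sum _ _ _).symm

def altChains (j : ℕ) : Submodule ℝ ((Fin j → X) → ℝ) where
  carrier := {α | AltChain α}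
  add_mem' ha hb π x := by simp [ha π x, hb π x, mul_add]
  zero_mem' π x := by simp
  smul_mem' c α hα π x := by simp [hα π x, mul_left_comm]

variable {X} [DecidableEq X]

theorem bdry_unitChain {j : ℕ} (t : Fin (j + 1) → X) :
    bdry (unitChain t) = ∑ i : Fin (j + 1), (-1 : ℝ) ^ (i : ℕ) • unitChain (t ∘ i.succAbove) := by
  funext y
  -- Laplace expansion of the determinant along the row of the new vertex
  have hexpand (x : X) : unitChain t (Fin.cons x y) = ∑ i : Fin (j + 1),
      (-1 : ℝ) ^ (i : ℕ) * (if x = t i then 1 else 0) * unitChain (t ∘ i.succAbove) y := by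
    rw [unitChain_eq_det, Matrix.det_succ_row_zero]
    refine sum_congr rfl fun i _ => ?_
    rw [unitChain_eq_det]
    congr 2
  simp only [bdry, hexpand, Finset.sum_apply, Pi.smul_apply, smul_eq_mul]
  rw [sum_comm]
  simp

theorem cobdry_comp_unitChain {j : ℕ} (f : ((Fin (j + 1) → X) → ℝ) →ₗ[ℝ] ℝ)
    (s : Fin (j + 2) → X) :
    cobdry (fun y => f (unitChain y)) s = f (bdry (unitChain s)) := by
  simp [cobdry, bdry_unitChain, map_sum, map_smul]

end Boundary

noncomputable def weightedL1 {ι : Type*} [Fintype ι] (w : ι → ℝ) (hw : ∀ i, 0 ≤ w i) :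
    Seminorm ℝ (ι → ℝ) :=
  Seminorm.of (fun α => ∑ i, |α i| * w i)
    (fun α β => by
      rw [← sum_add_distrib]
      exact sum_le_sum fun i _ => by
        rw [← add_mul]
        exact mul_le_mul_of_nonneg_right (abs_add_le _ _) (hw i))
    (fun c α => by simp [abs_mul, mul_sum, mul_assoc])

theorem weightedL1_apply {ι : Type*} [Fintype ι] (w : ι → ℝ) (hw : ∀ i, 0 ≤ w i) (α : ι → ℝ) :
    weightedL1 w hw α = ∑ i, |α i| * w i := rfl

namespace IsStrongPseudoMetric

variable {X : Type*} [Fintype X] [DecidableEq X] {k : ℕ} {d : (Fin (k + 1) → X) → ℝ}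

-- Dividing by `(k + 1)!` turns the sum over tuples into the paper's sum over subsets `τ`.
noncomputable def mass (hd : IsStrongPseudoMetric k d) : Seminorm ℝ ((Fin (k + 1) → X) → ℝ) :=
  weightedL1 (fun s => d s / (k + 1)!) fun s => div_nonneg (hd.nonneg s) (by positivity)

theorem mass_apply (hd : IsStrongPseudoMetric k d) (α : (Fin (k + 1) → X) → ℝ) :
    hd.mass α = (∑ s, |α s| * d s) / (k + 1)! := by
  simp only [mass, weightedL1_apply, sum_div, mul_div_assoc]

theorem mass_unitChain (hd : IsStrongPseudoMetric k d) {s : Fin (k + 1) → X}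
    (hs : Function.Injective s) : hd.mass (unitChain s) = d s := by
  rw [mass_apply, sum_abs_unitChain_mul hs d hd.perm]
  field_simp

theorem le_mass (hd : IsStrongPseudoMetric k d) (t : Fin (k + 1) → X) {α : (Fin (k + 1) → X) → ℝ}
    (hα : AltChain α) (hαt : bdry α = bdry (unitChain t)) : d t ≤ hd.mass α := by
  by_cases ht : Function.Injective t
  · rw [mass_apply, le_div_iff₀ (by positivity), mul_comm]
    exact hd.strong_simplex t ht α hα hαt
  · rw [hd.eq_zero t ht]
    exact apply_nonneg _ _

theorem exists_dual_bdry (hd : IsStrongPseudoMetric k d) (t : Fin (k + 1) → X) :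
    ∃ f : ((Fin k → X) → ℝ) →ₗ[ℝ] ℝ, f (bdry (unitChain t)) = d t ∧
      ∀ α, AltChain α → |f (bdry α)| ≤ hd.mass α := by
  set A := altChains X (k + 1)
  set u := bdryLinearMap X k ∘ₗ A.subtype
  have hcycle : ∀ w ∈ LinearMap.ker u,
      d t ≤ hd.mass.comp A.subtype (w + ⟨unitChain t, altChain_unitChain t⟩) := by
    intro w hw
    refine hd.le_mass t (A.add_mem w.2 (altChain_unitChain t)) ?_
    change bdryLinearMap X k (w + unitChain t) = bdryLinearMap X k (unitChain t)
    rw [map_add, show bdryLinearMap X k w = 0 from hw, zero_add]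
  obtain ⟨g, hgt, hker, hg⟩ := (hd.mass.comp A.subtype).exists_linearMap_apply_eq_of_le_coset
    (LinearMap.ker u) (hd.nonneg t) hcycle
  obtain ⟨f, rfl⟩ := u.exists_comp_eq_of_ker_le g hker
  exact ⟨f, hgt, fun α hα => hg ⟨α, hα⟩⟩

end IsStrongPseudoMetric

/-- for a strong pseudo metric `(X, d)` of arity `k + 2` and a tuple
`t`, there is a 1-dimensional coboundary metric `d'` (w.r.t. the absolute value,
i.e. `C_{k,∞}^1`) with `d' ≤ d` everywhere and `d' t = d t`. -/
theorem stmt_7 (k : ℕ) {X : Type*} [Fintype X] [DecidableEq X]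
    (d : (Fin (k + 2) → X) → ℝ) (hd : IsStrongPseudoMetric (k + 1) d)
    (t : Fin (k + 2) → X) :
    ∃ d' : (Fin (k + 2) → X) → ℝ,
      IsCoboundaryMetric k 1 (fun v => |v 0|) d' ∧
        (∀ y : Fin (k + 2) → X, d' y ≤ d y) ∧ d' t = d t := by
  obtain ⟨f, hft, hf⟩ := hd.exists_dual_bdry t
  let F : (Fin (k + 1) → X) → ℝ := fun y => f (unitChain y)
  refine ⟨fun x => if Function.Injective x then |cobdry F x| else 0,
    ⟨fun _ => F, fun _ => altChain_comp_unitChain f, fun x hx => if_pos hx,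
      fun x hx => if_neg hx⟩, fun y => ?_, ?_⟩
  · dsimp only
    split_ifs with hy
    · rw [cobdry_comp_unitChain, ← hd.mass_unitChain hy]
      exact hf _ (altChain_unitChain y)
    · exact hd.nonneg y
  · dsimp only
    split_ifs with ht
    · rw [cobdry_comp_unitChain, hft, abs_of_nonneg (hd.nonneg t)]
    · exact (hd.eq_zero t ht).symm
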